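/- arXiv:2410.19551 — 3 statements merged into one kernel-verified Lean document; each statement's English description precedes it below -/
import Mathlib

section
/- Let G be a locally compact second countable topological group with no small subgroups, i.e., there is a neighborhood U of the identity such that the only subgroup of G contained in U is the trivial subgroup. If (Γ_i)_{i∈ℕ} is a sequence of discrete subgroups of G converging in the Chabauty topology to a discrete subgroup Γ of G, then the counting measures Σ_{γ∈Γ_i} δ_γ converge vaguely to the counting measure Σ_{γ∈Γ} δ_γ, as measures on G. -/
open MeasureTheory Filter Topology

/-- A sequence of closed subgroups `Γ i` converges to a closed subgroup `H` in the Chabauty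
topology: (i) every `h ∈ H` is a limit of a sequence `γ i ∈ Γ i`, and (ii) every limit of a
convergent subsequence `γ (k j) ∈ Γ (k j)` lies in `H`. -/
def ChabautyLim {G : Type*} [Group G] [TopologicalSpace G]
    (Γ : ℕ → Subgroup G) (H : Subgroup G) : Prop :=
  (∀ h ∈ H, ∃ γ : ℕ → G, (∀ i, γ i ∈ Γ i) ∧ Tendsto γ atTop (𝓝 h)) ∧
  (∀ k : ℕ → ℕ, StrictMono k → ∀ γ : ℕ → G, (∀ j, γ j ∈ Γ (k j)) →
    ∀ x : G, Tendsto γ atTop (𝓝 x) → x ∈ H)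

/-- The counting measure of a discrete subgroup `Γ ≤ G`, viewed as a measure on `G` via
pushforward along the inclusion. -/
noncomputable def countingMeasure {G : Type*} [Group G] [TopologicalSpace G]
    [MeasurableSpace G] (Γ : Subgroup G) : Measure G :=
  (Measure.count : Measure Γ).map (Subtype.val)

/-! No small subgroups makes the `Γ i` eventually *uniformly* discrete: if `γ ≠ 1` in `Γ i` lies in
a small neighbourhood `V` of `1`, some power of `γ` leaves `V` but stays in the compact set `V * V`,
and a Chabauty limit of such powers would be an element of `Γ` near `1` but outside `V`.
For `f` supported in a compact `K`, each point `x` of the finite set `Γ ∩ K` is a limit of points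
`c x i ∈ Γ i`; by uniform discreteness and the Chabauty condition these are eventually the only
points of `Γ i` in `K`, so both integrals are finite sums over `Γ ∩ K`, and `f (c x i) → f x`. -/

open Pointwise

section CountingMeasure

variable {G E : Type*} [Group G] [TopologicalSpace G] [T2Space G] [MeasurableSpace G]
  [BorelSpace G] [NormedAddCommGroup E] [NormedSpace ℝ E] [CompleteSpace E]

theorem integral_countingMeasure_eq_sum (Γ : Subgroup G) [Countable Γ] (f : G → E)
    (t : Finset G) (ht : ↑t ⊆ (Γ : Set G)) (hf : ∀ γ ∈ Γ, f γ ≠ 0 → γ ∈ t) :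
    ∫ g, f g ∂(countingMeasure Γ) = ∑ g ∈ t, f g := by
  classical
  have hΓ : MeasurableEmbedding ((↑) : Γ → G) :=
    .subtype_coe (Set.countable_coe_iff.mp ‹_›).measurableSet
  have hzero : ∀ x ∉ t.subtype (· ∈ Γ), f x = 0 := fun x hx => by
    by_contra h
    exact hx (by simpa using hf x x.2 h)
  have hint : Integrable (fun x : Γ => f x) Measure.count :=
    integrable_count_iff.mpr <|
      summable_of_ne_finset_zero (s := t.subtype (· ∈ Γ)) fun x hx => by simp [hzero x hx]
  rw [countingMeasure, hΓ.integral_map, integral_countable hint,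
    tsum_eq_sum fun x hx => by simp [hzero x hx]]
  simp only [Measure.real, Measure.count_singleton, ENNReal.toReal_one, one_smul]
  exact Finset.sum_subtype_of_mem f ht

end CountingMeasure

theorem Finset.eventually_injOn_of_tendsto {X α : Type*} [TopologicalSpace X] [T2Space X]
    {l : Filter α} (s : Finset X) {c : X → α → X} (hc : ∀ x ∈ s, Tendsto (c x) l (𝓝 x)) :
    ∀ᶠ a in l, Set.InjOn (fun x => c x a) s := by
  have : ∀ᶠ a in l, ∀ x ∈ s, ∀ y ∈ s, x ≠ y → c x a ≠ c y a :=
    s.eventually_all.mpr fun x hx => s.eventually_all.mpr fun y hy => by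
      by_cases hxy : x = y
      · simp [hxy]
      · filter_upwards [(hc x hx).prodMk_nhds (hc y hy) |>.eventually
          (isOpen_ne_fun continuous_fst continuous_snd |>.mem_nhds hxy)] with a ha _ using ha
  filter_upwards [this] with a ha x hx y hy hxy
  by_contra hne
  exact ha x hx y hy hne hxy

section NoSmallSubgroups

variable {G : Type*} [Group G]

theorem exists_pow_notMem_inter_inv {U : Set G} (hU : ∀ K : Subgroup G, (K : Set G) ⊆ U → K = ⊥)
    {γ : G} (hγ : γ ≠ 1) : ∃ n : ℕ, γ ^ n ∉ U ∩ U⁻¹ := by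
  by_contra! h
  have hsub : (Subgroup.zpowers γ : Set G) ⊆ U := by
    rintro _ ⟨(n | n), rfl⟩
    · simpa using (h n).1
    · simpa [zpow_negSucc] using (h (n + 1)).2
  exact hγ (Subgroup.zpowers_eq_bot.mp (hU _ hsub))

theorem exists_pow_mem_mul_notMem {V : Set G} (hV : 1 ∈ V) {γ : G} (hγ : γ ∈ V)
    (h : ∃ n : ℕ, γ ^ n ∉ V) : ∃ n : ℕ, γ ^ n ∈ V * V ∧ γ ^ n ∉ V := by
  classical
  obtain ⟨m, hm⟩ : ∃ m, Nat.find h = m + 1 :=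
    Nat.exists_eq_add_one.mpr (Nat.pos_of_ne_zero fun h0 => Nat.find_spec h (by simpa [h0]))
  refine ⟨m + 1, ?_, hm ▸ Nat.find_spec h⟩
  rw [pow_succ]
  exact Set.mul_mem_mul (not_not.mp (Nat.find_min h (by omega))) hγ

end NoSmallSubgroups

namespace ChabautyLim

variable {G : Type*} [Group G] [TopologicalSpace G] [FirstCountableTopology G]
  {Γseq : ℕ → Subgroup G} {Γ : Subgroup G}

theorem inter_nonempty_of_frequently (hchab : ChabautyLim Γseq Γ)
    {K : Set G} (hK : IsCompact K) (h : ∃ᶠ i in atTop, ((Γseq i : Set G) ∩ K).Nonempty) :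
    ((Γ : Set G) ∩ K).Nonempty := by
  obtain ⟨k, hk, hkK⟩ := extraction_of_frequently_atTop h
  choose γ hγΓ hγK using hkK
  obtain ⟨x, hxK, φ, hφ, hγx⟩ := hK.tendsto_subseq hγK
  exact ⟨x, hchab.2 (k ∘ φ) (hk.comp hφ) (γ ∘ φ) (fun j => hγΓ (φ j)) x hγx, hxK⟩

theorem exists_nhds_one_eventually_eq_one [IsTopologicalGroup G] [LocallyCompactSpace G]
    (hchab : ChabautyLim Γseq Γ) [DiscreteTopology Γ]
    {U : Set G} (hU : U ∈ 𝓝 1) (hUK : ∀ K : Subgroup G, (K : Set G) ⊆ U → K = ⊥) :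
    ∃ V ∈ 𝓝 (1 : G), ∀ᶠ i in atTop, ∀ γ ∈ Γseq i, γ ∈ V → γ = 1 := by
  obtain ⟨O, hO, hOΓ⟩ := discreteTopology_subtype_iff'.mp ‹DiscreteTopology Γ› 1 Γ.one_mem
  obtain ⟨K, hK, hKO, hKc⟩ := local_compact_nhds (hO.mem_nhds (hOΓ.ge rfl).1)
  obtain ⟨W, hW, hWK⟩ : ∃ W ∈ 𝓝 (1 : G), W * W ⊆ K :=
    let ⟨W, hWo, hW1, hWK⟩ := exists_open_nhds_one_mul_subset hK
    ⟨W, hWo.mem_nhds hW1, hWK⟩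
  set V := W ∩ (U ∩ U⁻¹)
  have hV : V ∈ 𝓝 (1 : G) := inter_mem hW (inter_mem hU (inv_mem_nhds_one G hU))
  refine ⟨V, hV, ?_⟩
  by_contra h
  have hfreq : ∃ᶠ i in atTop, ((Γseq i : Set G) ∩ (K \ interior V)).Nonempty := by
    refine (not_eventually.mp h).mono fun i hi => ?_
    push Not at hi
    obtain ⟨γ, hγΓ, hγV, hγ1⟩ := hi
    obtain ⟨n, hnU⟩ := exists_pow_notMem_inter_inv hUK hγ1
    obtain ⟨m, hmVV, hmV⟩ :=
      exists_pow_mem_mul_notMem (mem_of_mem_nhds hV) hγV ⟨n, fun hn => hnU hn.2⟩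
    exact ⟨γ ^ m, pow_mem hγΓ m,
      hWK (Set.mul_subset_mul Set.inter_subset_left Set.inter_subset_left hmVV),
      fun hm => hmV (interior_subset hm)⟩
  obtain ⟨x, hxΓ, hxK, hxV⟩ := hchab.inter_nonempty_of_frequently (hKc.diff isOpen_interior) hfreq
  have hx1 : x = 1 := by simpa using hOΓ.le ⟨hKO hxK, hxΓ⟩
  exact hxV (hx1 ▸ mem_interior_iff_mem_nhds.mpr hV)

theorem eventually_exists_eq_of_tendsto [IsTopologicalGroup G] (hchab : ChabautyLim Γseq Γ)
    {V : Set G} (hV : V ∈ 𝓝 1) (hΓV : ∀ᶠ i in atTop, ∀ γ ∈ Γseq i, γ ∈ V → γ = 1) {K : Set G}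
    (hK : IsCompact K) {F : Finset G} (hF : (Γ : Set G) ∩ K ⊆ F) {c : G → ℕ → G}
    (hcΓ : ∀ x ∈ F, ∀ i, c x i ∈ Γseq i) (hc : ∀ x ∈ F, Tendsto (c x) atTop (𝓝 x)) :
    ∀ᶠ i in atTop, ∀ γ ∈ Γseq i, γ ∈ K → ∃ x ∈ F, c x i = γ := by
  obtain ⟨W, hW, hWV⟩ := exists_nhds_split_inv hV
  have hball (x : G) : (· * x⁻¹) ⁻¹' W ∈ 𝓝 x := by
    rw [← nhds_translation_mul_inv x]
    exact preimage_mem_comap hW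
  set O := ⋃ x ∈ F, interior ((· * x⁻¹) ⁻¹' W)
  have hcover : ∀ᶠ i in atTop, (Γseq i : Set G) ∩ K ⊆ O := by
    by_contra h
    have hfreq : ∃ᶠ i in atTop, ((Γseq i : Set G) ∩ (K \ O)).Nonempty :=
      (not_eventually.mp h).mono fun i hi =>
        let ⟨γ, hγ, hγO⟩ := Set.not_subset.mp hi
        ⟨γ, hγ.1, hγ.2, hγO⟩
    obtain ⟨x, hxΓ, hxK, hxO⟩ := hchab.inter_nonempty_of_frequently (hK.diff (isOpen_biUnion
      fun _ _ => isOpen_interior)) hfreq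
    exact hxO (Set.mem_biUnion (hF ⟨hxΓ, hxK⟩) (mem_interior_iff_mem_nhds.mpr (hball x)))
  have hcW : ∀ᶠ i in atTop, ∀ x ∈ F, c x i * x⁻¹ ∈ W :=
    F.eventually_all.mpr fun x hx => hc x hx (hball x)
  filter_upwards [hcover, hcW, hΓV] with i hcoveri hcWi hΓVi γ hγ hγK
  obtain ⟨x, hx, hγx⟩ := Set.mem_iUnion₂.mp (hcoveri ⟨hγ, hγK⟩)
  refine ⟨x, hx, ?_⟩
  have hdiv : c x i * γ⁻¹ ∈ V := by
    simpa [div_eq_mul_inv, mul_assoc] using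
      hWV _ (hcWi x hx) _ (interior_subset (s := (· * x⁻¹) ⁻¹' W) hγx)
  exact mul_inv_eq_one.mp (hΓVi _ (mul_mem (hcΓ x hx i) (inv_mem hγ)) hdiv)

theorem eventually_integral_countingMeasure_eq_sum {E : Type*} [IsTopologicalGroup G]
    [T2Space G] [MeasurableSpace G] [BorelSpace G] [∀ i, Countable (Γseq i)]
    [NormedAddCommGroup E] [NormedSpace ℝ E] [CompleteSpace E] (hchab : ChabautyLim Γseq Γ)
    {V : Set G} (hV : V ∈ 𝓝 1)
    (hΓV : ∀ᶠ i in atTop, ∀ γ ∈ Γseq i, γ ∈ V → γ = 1) {f : G → E} (hfK : HasCompactSupport f)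
    {F : Finset G} (hF : (Γ : Set G) ∩ tsupport f ⊆ F) {c : G → ℕ → G}
    (hcΓ : ∀ x ∈ F, ∀ i, c x i ∈ Γseq i) (hc : ∀ x ∈ F, Tendsto (c x) atTop (𝓝 x)) :
    ∀ᶠ i in atTop, ∫ g, f g ∂(countingMeasure (Γseq i)) = ∑ x ∈ F, f (c x i) := by
  classical
  filter_upwards [hchab.eventually_exists_eq_of_tendsto hV hΓV hfK hF hcΓ hc,
    F.eventually_injOn_of_tendsto hc] with i hcover hinj
  rw [integral_countingMeasure_eq_sum (Γseq i) f (F.image (c · i)), Finset.sum_image hinj]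
  · simpa [Set.subset_def] using fun x hx => hcΓ x hx i
  · intro γ hγ hfγ
    obtain ⟨x, hx, rfl⟩ := hcover γ hγ (subset_tsupport f hfγ)
    exact Finset.mem_image_of_mem _ hx

end ChabautyLim

/-- If `G` is a locally compact second countable group with no small subgroups and the discrete
subgroups `Γ i` converge in the Chabauty topology to a *discrete* subgroup `Γ`, then the counting
measures of the `Γ i` converge vaguely to the counting measure of `Γ`. -/
theorem stmt_2 {G : Type*} [Group G] [TopologicalSpace G] [IsTopologicalGroup G] [T2Space G]
    [LocallyCompactSpace G] [SecondCountableTopology G]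
    [MeasurableSpace G] [BorelSpace G]
    (hNSS : ∃ U ∈ 𝓝 (1 : G), ∀ K : Subgroup G, (K : Set G) ⊆ U → K = ⊥)
    (Γseq : ℕ → Subgroup G) (hΓdisc : ∀ i, DiscreteTopology (Γseq i))
    (Γ : Subgroup G) (hdisc : DiscreteTopology Γ) (hcl : IsClosed (Γ : Set G))
    (hchab : ChabautyLim Γseq Γ) :
    ∀ f : G → ℝ, Continuous f → HasCompactSupport f →
      Tendsto (fun i => ∫ g, f g ∂(countingMeasure (Γseq i))) atTop
        (𝓝 (∫ g, f g ∂(countingMeasure Γ))) := by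
  intro f hf hfK
  have hcountable (H : Subgroup G) [DiscreteTopology H] : Countable H :=
    TopologicalSpace.separableSpace_iff_countable.mp inferInstance
  obtain ⟨U, hU, hUK⟩ := hNSS
  obtain ⟨V, hV, hΓV⟩ := hchab.exists_nhds_one_eventually_eq_one hU hUK
  have hfin : ((Γ : Set G) ∩ tsupport f).Finite := (hfK.inter_left hcl).finite
    (isDiscrete_iff_discreteTopology.mpr (.of_subset hdisc Set.inter_subset_left))
  set F := hfin.toFinset
  have hFΓ : ∀ x ∈ F, x ∈ Γ := fun x hx => (hfin.mem_toFinset.mp hx).1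
  choose! c hcΓ hc using hchab.1
  rw [integral_countingMeasure_eq_sum Γ f F hFΓ
    fun γ hγ hfγ => hfin.mem_toFinset.mpr ⟨hγ, subset_tsupport f hfγ⟩]
  refine (tendsto_finsetSum F fun x hx => (hf.tendsto x).comp (hc x (hFΓ x hx))).congr' ?_
  exact (hchab.eventually_integral_countingMeasure_eq_sum hV hΓV hfK hfin.coe_toFinset.ge
    (fun x hx => hcΓ x (hFΓ x hx)) fun x hx => hc x (hFΓ x hx)).mono fun i hi => hi.symm
end

section
/- Let G be a locally compact group with a left Haar measure ν, let Γ be a discrete subgroup of G, let U be a symmetric (U = U^{−1}) relatively compact open neighborhood of the identity, and let C ⊆ G be compact. Then #(Γ ∩ C) · ν(U) ≤ ν(C·U) · #(Γ ∩ U²), where U² := U·U and all the cardinalities involved are finite. -/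
/-!
Choose a maximal subset `F ⊆ Γ ∩ C` whose translates `f • U` are pairwise disjoint. These
translates lie in `C * U`, so `#F · ν(U) ≤ ν(C * U)`. By maximality every `γ ∈ Γ ∩ C` has
`γ • U` meeting some `f • U`, i.e. `f⁻¹ γ ∈ Γ ∩ U U⁻¹ = Γ ∩ U²`; hence `Γ ∩ C ⊆ F · (Γ ∩ U²)`
and `#(Γ ∩ C) ≤ #F · #(Γ ∩ U²)`. This is the packing argument of Ruzsa's covering lemma,
with Haar measure in place of counting.
-/

open MeasureTheory Pointwise

section

variable {G : Type*} [Group G]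

theorem Set.inv_mul_mem_div_of_not_disjoint_smul {B : Set G} {a b : G}
    (h : ¬Disjoint (a • B) (b • B)) : b⁻¹ * a ∈ B / B := by
  obtain ⟨x, ⟨c, hc, rfl⟩, ⟨d, hd, hdc⟩⟩ := Set.not_disjoint_iff.1 h
  refine ⟨d, hd, c, hc, ?_⟩
  simp only [smul_eq_mul] at hdc
  rw [eq_inv_mul_iff_mul_eq, mul_div_assoc', hdc, mul_div_cancel_right]

theorem Set.Finite.exists_subset_pairwiseDisjoint_smul_subset_mul_div {A B : Set G}
    (hA : A.Finite) (hB : B.Nonempty) :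
    ∃ F ⊆ A, F.PairwiseDisjoint (· • B) ∧ A ⊆ F * (B / B) := by
  obtain ⟨F, hFmax⟩ := Set.Finite.exists_maximal
    (s := {F | F ⊆ A ∧ F.PairwiseDisjoint (· • B)})
    (hA.finite_subsets.subset fun _ hF ↦ hF.1) ⟨∅, Set.empty_subset _, Set.pairwiseDisjoint_empty⟩
  obtain ⟨hFA, hF⟩ := hFmax.1
  refine ⟨F, hFA, hF, fun a ha ↦ ?_⟩
  suffices ∃ b ∈ F, ¬Disjoint (a • B) (b • B) by
    obtain ⟨b, hb, hab⟩ := this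
    exact ⟨b, hb, _, Set.inv_mul_mem_div_of_not_disjoint_smul hab, mul_inv_cancel_left b a⟩
  by_cases hau : a ∈ F
  · exact ⟨a, hau, by simpa using hB.ne_empty⟩
  by_contra! H
  exact hFmax.not_gt ⟨Set.insert_subset ha hFA, hF.insert_of_notMem hau H⟩
    (Set.ssubset_insert hau)

theorem Set.subset_mul_inter_subgroup {A F V : Set G} {H : Subgroup G}
    (hA : A ⊆ H) (hF : F ⊆ H) (hAFV : A ⊆ F * V) : A ⊆ F * ((H : Set G) ∩ V) := by
  intro a ha
  obtain ⟨f, hf, v, hv, rfl⟩ := hAFV ha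
  refine ⟨f, hf, v, ⟨?_, hv⟩, rfl⟩
  simpa using H.mul_mem (H.inv_mem (hF hf)) (hA ha)

theorem Set.ncard_le_ncard_mul_ncard_of_subset_mul {A F W : Set G} (hF : F.Finite)
    (hW : W.Finite) (h : A ⊆ F * W) : A.ncard ≤ F.ncard * W.ncard :=
  (Set.ncard_le_ncard h (hF.mul hW)).trans Set.natCard_mul_le

theorem Subgroup.finite_inter_of_isCompact [TopologicalSpace G] [IsTopologicalGroup G] [T2Space G]
    (Γ : Subgroup G) [DiscreteTopology Γ] {K : Set G} (hK : IsCompact K) :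
    ((Γ : Set G) ∩ K).Finite :=
  (hK.inter_left Subgroup.isClosed_of_discrete).finite
    ((isDiscrete_iff_discreteTopology.mpr ‹_›).mono Set.inter_subset_left)

theorem MeasureTheory.ncard_mul_measure_le_measure_mul [MeasurableSpace G] [MeasurableMul G]
    (ν : Measure G) [ν.IsMulLeftInvariant] {F C U : Set G} (hF : F.Finite) (hFC : F ⊆ C)
    (hU : MeasurableSet U) (hdisj : F.PairwiseDisjoint (· • U)) :
    F.ncard * ν U ≤ ν (C * U) := by
  lift F to Finset G using hF
  calc (F : Set G).ncard * ν U = ∑ f ∈ F, ν (f • U) := by simp [Set.ncard_coe_finset]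
    _ = ν (⋃ f ∈ F, f • U) := (measure_biUnion_finset hdisj fun f _ ↦ hU.const_smul f).symm
    _ = ν ((F : Set G) * U) := by rw [← Set.iUnion_mul_left_image]; rfl
    _ ≤ ν (C * U) := measure_mono (Set.mul_subset_mul_right hFC)

end

theorem stmt_11_general {G : Type*} [Group G] [TopologicalSpace G] [IsTopologicalGroup G] [T2Space G]
    [MeasurableSpace G] [BorelSpace G]
    (ν : Measure G) (hν : ν.IsHaarMeasure)
    (Γ : Subgroup G) (hΓ : DiscreteTopology Γ)
    (U : Set G) (hUopen : IsOpen U) (hUone : (1 : G) ∈ U) (hUsymm : U⁻¹ = U)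
    (hUrc : IsCompact (closure U))
    (C : Set G) (hC : IsCompact C) :
    ((Γ : Set G) ∩ C).Finite ∧ ((Γ : Set G) ∩ (U * U)).Finite ∧
      (((Γ : Set G) ∩ C).ncard : ENNReal) * ν U ≤
        ν (C * U) * (((Γ : Set G) ∩ (U * U)).ncard : ENNReal) := by
  have finC := Γ.finite_inter_of_isCompact hC
  have finW : ((Γ : Set G) ∩ (U * U)).Finite :=
    (Γ.finite_inter_of_isCompact (hUrc.mul hUrc)).subset
      (Set.inter_subset_inter_right _ (Set.mul_subset_mul subset_closure subset_closure))
  refine ⟨finC, finW, ?_⟩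
  obtain ⟨F, hFA, hdisj, hcover⟩ :=
    finC.exists_subset_pairwiseDisjoint_smul_subset_mul_div ⟨1, hUone⟩
  rw [div_eq_mul_inv, hUsymm] at hcover
  have hF := finC.subset hFA
  have hcount := Set.ncard_le_ncard_mul_ncard_of_subset_mul hF finW
    (Set.subset_mul_inter_subgroup Set.inter_subset_left (hFA.trans Set.inter_subset_left) hcover)
  have hpack := ncard_mul_measure_le_measure_mul ν hF (hFA.trans Set.inter_subset_right)
    hUopen.measurableSet hdisj
  calc (((Γ : Set G) ∩ C).ncard : ENNReal) * ν U
      ≤ (F.ncard * ((Γ : Set G) ∩ (U * U)).ncard : ℕ) * ν U := by gcongr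
    _ = (F.ncard * ν U) * ((Γ : Set G) ∩ (U * U)).ncard := by push_cast; ring
    _ ≤ ν (C * U) * ((Γ : Set G) ∩ (U * U)).ncard := by gcongr

/-- Packing estimate: if `ν` is a left Haar measure on a locally compact group `G`, `Γ` is a
discrete subgroup, `U` is a symmetric relatively compact open neighborhood of the identity and
`C ⊆ G` is compact, then `#(Γ ∩ C) · ν(U) ≤ ν(C·U) · #(Γ ∩ U²)`, all cardinalities involved
being finite. -/
theorem stmt_11 {G : Type*} [Group G] [TopologicalSpace G] [IsTopologicalGroup G] [T2Space G]
    [LocallyCompactSpace G] [MeasurableSpace G] [BorelSpace G]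
    (ν : Measure G) (hν : ν.IsHaarMeasure)
    (Γ : Subgroup G) (hΓ : DiscreteTopology Γ)
    (U : Set G) (hUopen : IsOpen U) (hUone : (1 : G) ∈ U) (hUsymm : U⁻¹ = U)
    (hUrc : IsCompact (closure U))
    (C : Set G) (hC : IsCompact C) :
    ((Γ : Set G) ∩ C).Finite ∧ ((Γ : Set G) ∩ (U * U)).Finite ∧
      (((Γ : Set G) ∩ C).ncard : ENNReal) * ν U ≤
        ν (C * U) * (((Γ : Set G) ∩ (U * U)).ncard : ENNReal) :=
  stmt_11_general ν hν Γ hΓ U hUopen hUone hUsymm hUrc C hC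
end

section
/- Let G be a topological group and let U be a neighborhood of the identity e such that the only subgroup of G contained in U is the trivial subgroup {e}. Let U₁ be a symmetric (U₁ = U₁^{−1}) subset of G containing e with U₁·U₁ ⊆ U. If Γ is a subgroup of G such that Γ ∩ (U₁⁴ ∖ U₁²) = ∅, then Γ ∩ U₁² = {e}, where U₁² := U₁·U₁ and U₁⁴ := U₁·U₁·U₁·U₁. -/
open Pointwise Topology

namespace Subgroup

variable {G : Type*} [Group G]

def interOfDisjointMulDiff (Γ : Subgroup G) {S : Set G} (one_mem : (1 : G) ∈ S)
    (inv_eq : S⁻¹ = S) (hΓ : Disjoint (Γ : Set G) ((S * S) \ S)) : Subgroup G where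
  carrier := Γ ∩ S
  one_mem' := ⟨Γ.one_mem, one_mem⟩
  mul_mem' {x y} hx hy := by
    have hxy : x * y ∈ Γ := Γ.mul_mem hx.1 hy.1
    exact ⟨hxy, by_contra fun hS => hΓ.notMem_of_mem_left hxy ⟨Set.mul_mem_mul hx.2 hy.2, hS⟩⟩
  inv_mem' {x} hx := ⟨Γ.inv_mem hx.1, inv_eq ▸ Set.inv_mem_inv.mpr hx.2⟩

end Subgroup

theorem stmt_13_general {G : Type*} [Group G]
    (U : Set G)
    (hNSS : ∀ K : Subgroup G, (K : Set G) ⊆ U → K = ⊥)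
    (U₁ : Set G) (hone : (1 : G) ∈ U₁) (hsymm : U₁⁻¹ = U₁) (hU₁ : U₁ * U₁ ⊆ U)
    (Γ : Subgroup G)
    (havoid : (Γ : Set G) ∩ ((U₁ * U₁ * U₁ * U₁) \ (U₁ * U₁)) = ∅) :
    (Γ : Set G) ∩ (U₁ * U₁) = {1} := by
  have hdisj : Disjoint (Γ : Set G) ((U₁ * U₁ * (U₁ * U₁)) \ (U₁ * U₁)) := by
    rwa [Set.disjoint_iff_inter_eq_empty, ← mul_assoc]
  set K := Γ.interOfDisjointMulDiff (one_mul (1 : G) ▸ Set.mul_mem_mul hone hone)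
    (by rw [mul_inv_rev, hsymm]) hdisj
  have hK : K = ⊥ := hNSS K fun x hx => hU₁ hx.2
  change (K : Set G) = {1}
  rw [hK, Subgroup.coe_bot]

/-- Let `G` be a topological group and `U` a neighborhood of the identity containing no
non-trivial subgroup of `G`. Let `U₁` be a symmetric subset containing the identity with
`U₁·U₁ ⊆ U`. If a subgroup `Γ` avoids the annulus `U₁⁴ ∖ U₁²`, then `Γ ∩ U₁² = {1}`. -/
theorem stmt_13 {G : Type*} [Group G] [TopologicalSpace G]
    (U : Set G) (hU : U ∈ 𝓝 (1 : G))
    (hNSS : ∀ K : Subgroup G, (K : Set G) ⊆ U → K = ⊥)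
    (U₁ : Set G) (hone : (1 : G) ∈ U₁) (hsymm : U₁⁻¹ = U₁) (hU₁ : U₁ * U₁ ⊆ U)
    (Γ : Subgroup G)
    (havoid : (Γ : Set G) ∩ ((U₁ * U₁ * U₁ * U₁) \ (U₁ * U₁)) = ∅) :
    (Γ : Set G) ∩ (U₁ * U₁) = {1} :=
  stmt_13_general U hNSS U₁ hone hsymm hU₁ Γ havoid
end
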